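/- A symmetric m×m real matrix is positive definite if and only if all of its leading principal minors are positive. -/

import Mathlib

/-!
Induction on the size. If all leading minors of `A` are positive, the leading block `B` of one
size smaller is positive definite by induction. The Schur complement of `B` in `A` is a `1 × 1`
matrix with determinant `det A / det B > 0`, so `A` is positive semidefinite by the Schur
complement criterion, and `det A ≠ 0` upgrades this to positive definiteness. Conversely, every
principal submatrix of a positive definite matrix is positive definite.
-/

open Matrix

namespace Matrix

theorem posSemidef_of_unique_of_det_nonneg {o : Type*} [Fintype o] [DecidableEq o] [Unique o]
    {S : Matrix o o ℝ} (h : 0 ≤ S.det) : S.PosSemidef := by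
  have hS : S = diagonal fun _ => S.det := by
    ext i j
    rw [det_unique, Subsingleton.elim i default, Subsingleton.elim j default, diagonal_apply_eq]
  rw [hS, posSemidef_diagonal_iff]
  exact fun _ => h

theorem IsHermitian.eq_fromBlocks_toBlocks {n o α : Type*} [InvolutiveStar α]
    {C : Matrix (n ⊕ o) (n ⊕ o) α} (hC : C.IsHermitian) :
    C = Matrix.fromBlocks C.toBlocks₁₁ C.toBlocks₁₂ C.toBlocks₁₂ᴴ C.toBlocks₂₂ := by
  conv_lhs => rw [← fromBlocks_toBlocks C]
  congr
  ext i j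
  exact (congr_fun (congr_fun hC (.inr i)) (.inl j)).symm

theorem PosDef.fromBlocks_of_det_pos {n o : Type*} [Fintype n] [DecidableEq n] [Fintype o]
    [DecidableEq o] [Unique o] {B : Matrix n n ℝ} (hB : B.PosDef) (c : Matrix n o ℝ)
    (d : Matrix o o ℝ) (hdet : 0 < (fromBlocks B c cᴴ d).det) :
    (fromBlocks B c cᴴ d).PosDef := by
  have : Invertible B := hB.isUnit.invertible
  have hdet_eq : (fromBlocks B c cᴴ d).det = B.det * (d - cᴴ * B⁻¹ * c).det := by
    rw [det_fromBlocks₁₁, invOf_eq_nonsing_inv]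
  have hS : 0 < (d - cᴴ * B⁻¹ * c).det := pos_of_mul_pos_right (hdet_eq ▸ hdet) hB.det_pos.le
  have hpsd : (fromBlocks B c cᴴ d).PosSemidef :=
    (PosDef.fromBlocks₁₁ c d hB).mpr (posSemidef_of_unique_of_det_nonneg hS.le)
  exact hpsd.posDef_iff_det_ne_zero.mpr hdet.ne'

theorem posDef_of_posDef_submatrix_castSucc {n : ℕ} {A : Matrix (Fin (n + 1)) (Fin (n + 1)) ℝ}
    (hA : A.IsHermitian) (hB : (A.submatrix Fin.castSucc Fin.castSucc).PosDef)
    (hdet : 0 < A.det) : A.PosDef := by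
  let e : Fin n ⊕ Fin 1 ≃ Fin (n + 1) := finSumFinEquiv
  have hC : (A.submatrix e e).PosDef := by
    have hCdet : 0 < (A.submatrix e e).det := by rwa [det_submatrix_equiv_self]
    rw [(hA.submatrix e).eq_fromBlocks_toBlocks] at hCdet ⊢
    exact hB.fromBlocks_of_det_pos _ _ hCdet
  simpa using hC.submatrix e.symm.injective

theorem posDef_of_leading_minors_pos :
    ∀ {m : ℕ} {A : Matrix (Fin m) (Fin m) ℝ}, A.IsHermitian →
      (∀ (k : ℕ) (hk : k ≤ m), 1 ≤ k → 0 < (A.submatrix (Fin.castLE hk) (Fin.castLE hk)).det) →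
      A.PosDef
  | 0, A, _, _ => Subsingleton.elim A 1 ▸ PosDef.one
  | n + 1, A, hA, hdet => by
    have hdetA : 0 < A.det := by simpa using hdet (n + 1) le_rfl le_add_self
    refine posDef_of_posDef_submatrix_castSucc hA ?_ hdetA
    refine posDef_of_leading_minors_pos (hA.submatrix _) fun k hk hk1 => ?_
    rw [submatrix_submatrix]
    exact hdet k (hk.trans n.le_succ) hk1

end Matrix

/-- Sylvester's criterion: a symmetric `m×m` real matrix is positive definite iff
all of its leading principal minors are positive. -/
theorem posDef_iff_leading_principal_minors (m : ℕ)
    (A : Matrix (Fin m) (Fin m) ℝ) (hsym : Aᵀ = A) :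
    A.PosDef ↔
      ∀ (k : ℕ) (hk : k ≤ m), 1 ≤ k →
        0 < (Matrix.of fun i j : Fin k => A (Fin.castLE hk i) (Fin.castLE hk j)).det := by
  constructor
  · intro hA k hk _
    exact (hA.submatrix (Fin.castLE_injective hk)).det_pos
  · exact posDef_of_leading_minors_pos (isHermitian_iff_isSymm.mpr hsym)
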